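/- Let I be a finite set of real numbers (exponents) and let 0 < l ≤ m. For each i ∈ I let a_i ∈ ℝ with |a_i| ≤ f_i for some f_i ≥ 0, and suppose a ∈ ℝ satisfies a ≥ Σ_{i∈I} |i|·f_i·max(l^{i-1}, m^{i-1}). Then the function h(y) = Σ_{i∈I} a_i·y^{i} - a·y is monotone nonincreasing on the interval [l,m]. -/

import Mathlib

open Finset

lemma Real.rpow_le_max_of_mem_Icc {l m y : ℝ} (s : ℝ) (hl : 0 < l) (hy : y ∈ Set.Icc l m) :
    y ^ s ≤ max (l ^ s) (m ^ s) := by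
  rcases le_or_gt 0 s with hs | hs
  · exact le_max_of_le_right (Real.rpow_le_rpow (hl.trans_le hy.1).le hy.2 hs)
  · exact le_max_of_le_left (Real.rpow_le_rpow_of_nonpos hl hy.1 hs.le)

lemma hasDerivAt_sum_mul_rpow (I : Finset ℝ) (a : ℝ → ℝ) {y : ℝ} (hy : y ≠ 0) :
    HasDerivAt (fun y : ℝ => ∑ i ∈ I, a i * y ^ i) (∑ i ∈ I, a i * (i * y ^ (i - 1))) y :=
  HasDerivAt.fun_sum fun _ _ => (Real.hasDerivAt_rpow_const (Or.inl hy)).const_mul _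

lemma mul_mul_rpow_le_of_abs_le {c f i l m y : ℝ} (hc : |c| ≤ f) (hl : 0 < l)
    (hy : y ∈ Set.Icc l m) :
    c * (i * y ^ (i - 1)) ≤ |i| * f * max (l ^ (i - 1)) (m ^ (i - 1)) := by
  have hpow : 0 ≤ y ^ (i - 1) := Real.rpow_nonneg (hl.trans_le hy.1).le _
  calc c * (i * y ^ (i - 1)) ≤ |c * (i * y ^ (i - 1))| := le_abs_self _
    _ = |i| * |c| * y ^ (i - 1) := by
      rw [abs_mul, abs_mul, abs_of_nonneg hpow]; ring
    _ ≤ |i| * f * max (l ^ (i - 1)) (m ^ (i - 1)) := by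
      have hf : 0 ≤ f := (abs_nonneg c).trans hc
      gcongr
      exact Real.rpow_le_max_of_mem_Icc _ hl hy

theorem shifted_nonlinearity_antitone_general (I : Finset ℝ) (l m : ℝ) (hl : 0 < l)
    (a f : ℝ → ℝ) (haf : ∀ i ∈ I, |a i| ≤ f i)
    (a₀ : ℝ) (ha₀ : ∑ i ∈ I, |i| * f i * max (l ^ (i - 1)) (m ^ (i - 1)) ≤ a₀) :
    AntitoneOn (fun y : ℝ => (∑ i ∈ I, a i * y ^ i) - a₀ * y) (Set.Icc l m) := by
  have hderiv : ∀ y ∈ Set.Icc l m, HasDerivAt (fun y : ℝ => (∑ i ∈ I, a i * y ^ i) - a₀ * y)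
      ((∑ i ∈ I, a i * (i * y ^ (i - 1))) - a₀) y := fun y hy => by
    simpa using (hasDerivAt_sum_mul_rpow I a (hl.trans_le hy.1).ne').fun_sub
      ((hasDerivAt_id' y).const_mul a₀)
  refine antitoneOn_of_hasDerivWithinAt_nonpos (convex_Icc l m)
    (fun y hy => (hderiv y hy).continuousAt.continuousWithinAt)
    (fun y hy => (hderiv y (interior_subset hy)).hasDerivWithinAt) fun y hy => ?_
  exact sub_nonpos.2 <| (sum_le_sum fun i hi =>
    mul_mul_rpow_le_of_abs_le (haf i hi) hl (interior_subset hy)).trans ha₀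

/-- Shifted nonlinearity is nonincreasing: if `|a i| ≤ f i` for the exponents `i ∈ I`
and the shift `a₀` dominates `Σ |i| f i max(l^(i-1), m^(i-1))`, then
`y ↦ Σ aᵢ y^i - a₀ y` is antitone on `[l, m]` (`0 < l ≤ m`). -/
theorem shifted_nonlinearity_antitone (I : Finset ℝ) (l m : ℝ) (hl : 0 < l)
    (hlm : l ≤ m) (a f : ℝ → ℝ) (hf : ∀ i ∈ I, 0 ≤ f i) (haf : ∀ i ∈ I, |a i| ≤ f i)
    (a₀ : ℝ) (ha₀ : ∑ i ∈ I, |i| * f i * max (l ^ (i - 1)) (m ^ (i - 1)) ≤ a₀) :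
    AntitoneOn (fun y : ℝ => (∑ i ∈ I, a i * y ^ i) - a₀ * y) (Set.Icc l m) :=
  shifted_nonlinearity_antitone_general I l m hl a f haf a₀ ha₀
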